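/- arXiv:1705.03137 — 2 statements merged into one kernel-verified Lean document; each statement's English description precedes it below -/
import Mathlib

section
/- Φ is an exact potential for unilateral deviations: for every player i and every pair of states S, S' that differ only in the coordinates controlled by i (the action a_i and the links {g_{ij} : j ≠ i}), one has u_i(S') − u_i(S) = Φ(S') − Φ(S). -/
/-!
Every term of `Φ` is a sum over ordered pairs or triples of distinct players, and a deviation
of player `i` (a change of row `i`) only alters the summands of tuples through `i`. In a
symmetric pair term each pair `{i, j}` is counted twice, in the triangle term each triangle
through `i` is counted in its three rotations, and in the link-value term only `(i, j)` moves,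
since `g_{ji}` is controlled by `j`. So the weights `1/2` and `1/3` in `Φ` exactly compensate
the multiplicities, and the change of `Φ` is the change of `u_i`.
-/

open Finset

noncomputable section

/-- A network state: the diagonal entry `S i i` is player `i`'s action status `a_i`,
and the off-diagonal entry `S i j` (for `i ≠ j`) is the link status `g_{ij}`. -/
abbrev NetState (n : ℕ) := Fin n → Fin n → Bool

def bv (x : Bool) : ℝ := if x then 1 else 0

/-- Player `i`'s payoff
`u_i(S) = a_i v_i + h a_i Σ_{j≠i} a_j + φ a_i Σ_{j≠i} g_{ij} g_{ji} a_j
  + Σ_{j≠i} g_{ij} w_{ij} + m Σ_{j≠i} g_{ij} g_{ji}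
  + q Σ_{j,l pairwise distinct from each other and from i} g_{ij} g_{jl} g_{li}`. -/
def payoff (n : ℕ) (v : Fin n → ℝ) (w : Fin n → Fin n → ℝ) (h φ m q : ℝ)
    (S : NetState n) (i : Fin n) : ℝ :=
  bv (S i i) * v i
    + h * bv (S i i) * ∑ j ∈ univ.filter (fun j => j ≠ i), bv (S j j)
    + φ * bv (S i i) * ∑ j ∈ univ.filter (fun j => j ≠ i), bv (S i j) * bv (S j i) * bv (S j j)
    + ∑ j ∈ univ.filter (fun j => j ≠ i), bv (S i j) * w i j
    + m * ∑ j ∈ univ.filter (fun j => j ≠ i), bv (S i j) * bv (S j i)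
    + q * ∑ j ∈ univ.filter (fun j => j ≠ i),
        ∑ l ∈ univ.filter (fun l => l ≠ i ∧ l ≠ j),
          bv (S i j) * bv (S j l) * bv (S l i)

/-- The potential
`Φ(S) = Σ_i a_i v_i + (h/2) Σ_{i≠j} a_i a_j + (φ/2) Σ_{i≠j} a_i a_j g_{ij} g_{ji}
  + Σ_{i≠j} g_{ij} w_{ij} + (m/2) Σ_{i≠j} g_{ij} g_{ji}
  + (q/3) Σ_{i,j,l pairwise distinct} g_{ij} g_{jl} g_{li}`. -/
def potential (n : ℕ) (v : Fin n → ℝ) (w : Fin n → Fin n → ℝ) (h φ m q : ℝ)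
    (S : NetState n) : ℝ :=
  (∑ i, bv (S i i) * v i)
    + (h / 2) * ∑ i, ∑ j ∈ univ.filter (fun j => j ≠ i), bv (S i i) * bv (S j j)
    + (φ / 2) * ∑ i, ∑ j ∈ univ.filter (fun j => j ≠ i),
        bv (S i i) * bv (S j j) * bv (S i j) * bv (S j i)
    + (∑ i, ∑ j ∈ univ.filter (fun j => j ≠ i), bv (S i j) * w i j)
    + (m / 2) * ∑ i, ∑ j ∈ univ.filter (fun j => j ≠ i), bv (S i j) * bv (S j i)
    + (q / 3) * ∑ i, ∑ j ∈ univ.filter (fun j => j ≠ i),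
        ∑ l ∈ univ.filter (fun l => l ≠ i ∧ l ≠ j), bv (S i j) * bv (S j l) * bv (S l i)

section

variable {α M : Type*} [Fintype α] [AddCommGroup M]

theorem sum_sub_sum_eq_of_eq_of_ne (i : α) {f g : α → M} (hfg : ∀ x, x ≠ i → f x = g x) :
    ∑ x, f x - ∑ x, g x = f i - g i := by
  rw [← sum_sub_distrib]
  exact sum_eq_single i (fun x _ hx => sub_eq_zero.2 (hfg x hx)) (by simp)

variable [DecidableEq α]

theorem sum_offDiag_eq_of_eq_zero (i : α) {D : α → α → M}
    (hD : ∀ x y, x ≠ i → y ≠ i → D x y = 0) :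
    ∑ x, ∑ y ∈ univ.erase x, D x y = ∑ y ∈ univ.erase i, (D i y + D y i) := by
  rw [← add_sum_erase _ _ (mem_univ i), sum_add_distrib]
  congr 1
  refine sum_congr rfl fun x hx => ?_
  have hxi : x ≠ i := ne_of_mem_erase hx
  exact sum_eq_single_of_mem i (mem_erase.2 ⟨hxi.symm, mem_univ i⟩) fun y _ hy => hD x y hxi hy

theorem sum_offDiag_sub_sum_offDiag (i : α) {F G : α → α → M}
    (hFG : ∀ x y, x ≠ i → y ≠ i → F x y = G x y) :
    ∑ x, ∑ y ∈ univ.erase x, F x y - ∑ x, ∑ y ∈ univ.erase x, G x y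
      = ∑ y ∈ univ.erase i, (F i y - G i y + (F y i - G y i)) := by
  simp only [← sum_sub_distrib]
  exact sum_offDiag_eq_of_eq_zero i fun x y hx hy => sub_eq_zero.2 (hFG x y hx hy)

theorem erase_filter_ne_and_ne (x y : α) :
    (univ.erase x).erase y = univ.filter (fun z => z ≠ y ∧ z ≠ x) := by
  ext z; simp

theorem sum_distinct_triple_eq_of_eq_zero (i : α) {D : α → α → α → M}
    (hD : ∀ x y z, x ≠ i → y ≠ i → z ≠ i → D x y z = 0) :
    ∑ x, ∑ y ∈ univ.erase x, ∑ z ∈ univ.filter (fun z => z ≠ x ∧ z ≠ y), D x y z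
      = ∑ y ∈ univ.erase i, ∑ z ∈ univ.filter (fun z => z ≠ i ∧ z ≠ y),
          (D i y z + D y z i + D z i y) := by
  have off_i : ∀ x ∈ univ.erase i,
      ∑ y ∈ univ.erase x, ∑ z ∈ univ.filter (fun z => z ≠ x ∧ z ≠ y), D x y z
        = ∑ z ∈ univ.filter (fun z => z ≠ x ∧ z ≠ i), D x i z
          + ∑ y ∈ univ.filter (fun y => y ≠ i ∧ y ≠ x), D x y i := by
    intro x hx
    have hxi : x ≠ i := ne_of_mem_erase hx
    rw [← add_sum_erase _ _ (mem_erase.2 ⟨hxi.symm, mem_univ i⟩), erase_filter_ne_and_ne]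
    congr 1
    refine sum_congr rfl fun y hy => ?_
    obtain ⟨hyi, -⟩ := (mem_filter.1 hy).2
    exact sum_eq_single_of_mem i (by simp [hxi.symm, hyi.symm]) fun z _ hz => hD x y z hxi hyi hz
  have swap : ∑ x ∈ univ.erase i, ∑ z ∈ univ.filter (fun z => z ≠ x ∧ z ≠ i), D x i z
      = ∑ z ∈ univ.erase i, ∑ x ∈ univ.filter (fun x => x ≠ i ∧ x ≠ z), D x i z :=
    sum_comm' fun x z => by simp only [mem_erase, mem_filter, mem_univ]; tauto
  rw [← add_sum_erase _ _ (mem_univ i), sum_congr rfl off_i, sum_add_distrib, swap,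
    ← sum_add_distrib, ← sum_add_distrib]
  refine sum_congr rfl fun y _ => ?_
  simp only [sum_add_distrib]
  abel

end

def IsUnilateralDeviation {n : ℕ} (i : Fin n) (S S' : NetState n) : Prop :=
  ∀ x y, x ≠ i → S' x y = S x y

namespace IsUnilateralDeviation

variable {n : ℕ} {i : Fin n} {S S' : NetState n}

theorem bv_eq (hS : IsUnilateralDeviation i S S') {x : Fin n} (hx : x ≠ i) (y : Fin n) :
    bv (S' x y) = bv (S x y) := by
  rw [hS x y hx]

theorem sum_action_sub (hS : IsUnilateralDeviation i S S') (v : Fin n → ℝ) :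
    ∑ x, bv (S' x x) * v x - ∑ x, bv (S x x) * v x = bv (S' i i) * v i - bv (S i i) * v i :=
  sum_sub_sum_eq_of_eq_of_ne i fun x hx => by rw [hS.bv_eq hx]

theorem sum_action_pair_sub (hS : IsUnilateralDeviation i S S') :
    ∑ x, ∑ y ∈ univ.erase x, bv (S' x x) * bv (S' y y)
        - ∑ x, ∑ y ∈ univ.erase x, bv (S x x) * bv (S y y)
      = 2 * (bv (S' i i) * ∑ j ∈ univ.erase i, bv (S' j j)
          - bv (S i i) * ∑ j ∈ univ.erase i, bv (S j j)) := by
  rw [sum_offDiag_sub_sum_offDiag i fun x y hx hy => by rw [hS.bv_eq hx, hS.bv_eq hy],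
    mul_sum, mul_sum, ← sum_sub_distrib, mul_sum]
  exact sum_congr rfl fun _ _ => by ring

theorem sum_mutual_action_sub (hS : IsUnilateralDeviation i S S') :
    ∑ x, ∑ y ∈ univ.erase x, bv (S' x x) * bv (S' y y) * bv (S' x y) * bv (S' y x)
        - ∑ x, ∑ y ∈ univ.erase x, bv (S x x) * bv (S y y) * bv (S x y) * bv (S y x)
      = 2 * (bv (S' i i) * ∑ j ∈ univ.erase i, bv (S' i j) * bv (S' j i) * bv (S' j j)
          - bv (S i i) * ∑ j ∈ univ.erase i, bv (S i j) * bv (S j i) * bv (S j j)) := by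
  rw [sum_offDiag_sub_sum_offDiag i fun x y hx hy => by simp only [hS.bv_eq hx, hS.bv_eq hy],
    mul_sum, mul_sum, ← sum_sub_distrib, mul_sum]
  exact sum_congr rfl fun _ _ => by ring

theorem sum_link_value_sub (hS : IsUnilateralDeviation i S S') (w : Fin n → Fin n → ℝ) :
    ∑ x, ∑ y ∈ univ.erase x, bv (S' x y) * w x y - ∑ x, ∑ y ∈ univ.erase x, bv (S x y) * w x y
      = ∑ j ∈ univ.erase i, bv (S' i j) * w i j - ∑ j ∈ univ.erase i, bv (S i j) * w i j := by
  rw [sum_offDiag_sub_sum_offDiag i fun x y hx _ => by rw [hS.bv_eq hx], ← sum_sub_distrib]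
  exact sum_congr rfl fun j hj => by rw [hS.bv_eq (ne_of_mem_erase hj)]; ring

theorem sum_mutual_link_sub (hS : IsUnilateralDeviation i S S') :
    ∑ x, ∑ y ∈ univ.erase x, bv (S' x y) * bv (S' y x)
        - ∑ x, ∑ y ∈ univ.erase x, bv (S x y) * bv (S y x)
      = 2 * (∑ j ∈ univ.erase i, bv (S' i j) * bv (S' j i)
          - ∑ j ∈ univ.erase i, bv (S i j) * bv (S j i)) := by
  rw [sum_offDiag_sub_sum_offDiag i fun x y hx hy => by rw [hS.bv_eq hx, hS.bv_eq hy],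
    ← sum_sub_distrib, mul_sum]
  exact sum_congr rfl fun _ _ => by ring

theorem sum_triangle_sub (hS : IsUnilateralDeviation i S S') :
    ∑ x, ∑ y ∈ univ.erase x, ∑ z ∈ univ.filter (fun z => z ≠ x ∧ z ≠ y),
          bv (S' x y) * bv (S' y z) * bv (S' z x)
        - ∑ x, ∑ y ∈ univ.erase x, ∑ z ∈ univ.filter (fun z => z ≠ x ∧ z ≠ y),
          bv (S x y) * bv (S y z) * bv (S z x)
      = 3 * (∑ j ∈ univ.erase i, ∑ l ∈ univ.filter (fun l => l ≠ i ∧ l ≠ j),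
              bv (S' i j) * bv (S' j l) * bv (S' l i)
          - ∑ j ∈ univ.erase i, ∑ l ∈ univ.filter (fun l => l ≠ i ∧ l ≠ j),
              bv (S i j) * bv (S j l) * bv (S l i)) := by
  simp only [← sum_sub_distrib]
  rw [sum_distinct_triple_eq_of_eq_zero i fun x y z hx hy hz => by
      simp only [hS.bv_eq hx, hS.bv_eq hy, hS.bv_eq hz, sub_self], mul_sum]
  exact sum_congr rfl fun _ _ => by rw [mul_sum]; exact sum_congr rfl fun _ _ => by ring

end IsUnilateralDeviation

theorem exact_potential_general (n : ℕ) (v : Fin n → ℝ) (w : Fin n → Fin n → ℝ)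
    (h φ m q : ℝ) (i : Fin n) (S S' : NetState n)
    (hagree : ∀ x y : Fin n, x ≠ i → S' x y = S x y) :
    payoff n v w h φ m q S' i - payoff n v w h φ m q S i
      = potential n v w h φ m q S' - potential n v w h φ m q S := by
  have hS : IsUnilateralDeviation i S S' := hagree
  unfold payoff potential
  simp only [filter_ne']
  linear_combination -(hS.sum_action_sub v + h / 2 * hS.sum_action_pair_sub
    + φ / 2 * hS.sum_mutual_action_sub + hS.sum_link_value_sub w
    + m / 2 * hS.sum_mutual_link_sub + q / 3 * hS.sum_triangle_sub)

/-- **`Φ` is an exact potential for unilateral deviations.** If `S` and `S'` differ only in the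
coordinates controlled by player `i` (the action `a_i` and the links `{g_{ij} : j ≠ i}`, i.e.
the `i`-th row), then `u_i(S') − u_i(S) = Φ(S') − Φ(S)`. -/
theorem exact_potential (n : ℕ) (hn : 2 ≤ n) (v : Fin n → ℝ) (w : Fin n → Fin n → ℝ)
    (h φ m q : ℝ) (i : Fin n) (S S' : NetState n)
    (hagree : ∀ x y : Fin n, x ≠ i → S' x y = S x y) :
    payoff n v w h φ m q S' i - payoff n v w h φ m q S i
      = potential n v w h φ m q S' - potential n v w h φ m q S :=
  exact_potential_general n v w h φ m q i S S' hagree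
end
end

section
/- Stationary distribution of the k-player logit dynamic: let π(S) = exp(Φ(S)/β) / Σ_{Ŝ ∈ 𝒮_n} exp(Φ(Ŝ)/β). Then for every 1 < k ≤ n and every positive state-independent meeting distribution q(·) on meetings of dimension k, π is stationary for P_k, i.e. Σ_{S ∈ 𝒮_n} π(S) P_k(S, S') = π(S') for all S'; in particular the stationary distribution is the same for all k and all such meeting distributions. -/
open Finset

noncomputable section

/-- `S'` belongs to the neighborhood `N_k((i,J), S)`: it agrees with `S` on all coordinates
except possibly `a_i` (the coordinate `(i,i)`) and the links `{g_{ij} : j ∈ J}`. -/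
def inNbhd (n : ℕ) (i : Fin n) (J : Finset (Fin n)) (S S' : NetState n) : Prop :=
  ∀ x y : Fin n, ¬(x = i ∧ (y = i ∨ y ∈ J)) → S' x y = S x y

open scoped Classical in
/-- The neighborhood `N_k((i,J), S)` as a finite set of states. -/
noncomputable def nbhd (n : ℕ) (i : Fin n) (J : Finset (Fin n)) (S : NetState n) :
    Finset (NetState n) :=
  univ.filter (fun S' => inNbhd n i J S S')

open scoped Classical in
/-- Meetings of dimension `k`: pairs `(i, J)` with `i ∉ J` and `|J| = k - 1`. -/
noncomputable def meetings (n k : ℕ) : Finset (Fin n × Finset (Fin n)) :=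
  univ.filter (fun μ => μ.1 ∉ μ.2 ∧ μ.2.card = k - 1)

open scoped Classical in
/-- One-step transition kernel of the `k`-player logit dynamic:
`P_k(S, S') = Σ_{μ=(i,J) : S' ∈ N_k(μ,S)} q(μ) · exp(u_i(S')/β) / Σ_{T ∈ N_k(μ,S)} exp(u_i(T)/β)`. -/
noncomputable def kernel (n : ℕ) (v : Fin n → ℝ) (w : Fin n → Fin n → ℝ) (h φ m q : ℝ)
    (β : ℝ) (k : ℕ) (qm : Fin n × Finset (Fin n) → ℝ) (S S' : NetState n) : ℝ :=
  ∑ μ ∈ (meetings n k).filter (fun μ => S' ∈ nbhd n μ.1 μ.2 S),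
    qm μ * Real.exp (payoff n v w h φ m q S' μ.1 / β)
      / ∑ T ∈ nbhd n μ.1 μ.2 S, Real.exp (payoff n v w h φ m q T μ.1 / β)

/-- The stationary distribution `π(S) = exp(Φ(S)/β) / Σ_T exp(Φ(T)/β)`. -/
noncomputable def statDist (n : ℕ) (v : Fin n → ℝ) (w : Fin n → Fin n → ℝ) (h φ m q β : ℝ)
    (S : NetState n) : ℝ :=
  Real.exp (potential n v w h φ m q S / β)
    / ∑ T : NetState n, Real.exp (potential n v w h φ m q T / β)

/-! `Φ` is an exact potential for the payoffs: `Φ(S) - u_i(S)` does not depend on row `i` of `S`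
(player `i`'s action and outgoing links). Hence for `S, T` in a common neighbourhood `N_k(μ, ·)`
with `μ = (i, J)` we have detailed balance `π(S) e^{u_i(T)/β} = π(T) e^{u_i(S)/β}`. The
neighbourhoods of a fixed meeting partition the state space, so the logit update of a single
meeting preserves `π`, and `P_k` is a `q`-mixture of these updates. -/

section Splitting

variable {α : Type*} [Fintype α] [DecidableEq α]

theorem filter_ne_and_ne (x y : α) :
    univ.filter (fun l => l ≠ x ∧ l ≠ y) = (univ.erase x).erase y := by
  ext l
  simp [and_comm]

theorem sum_sum_erase_eq_two_mul_add (i : α) (f : α → α → ℝ) (hf : ∀ x y, f x y = f y x) :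
    ∑ x, ∑ y ∈ univ.erase x, f x y
      = 2 * ∑ y ∈ univ.erase i, f i y
        + ∑ x ∈ univ.erase i, ∑ y ∈ (univ.erase i).erase x, f x y := by
  have peel : ∀ x ∈ univ.erase i, ∑ y ∈ univ.erase x, f x y
      = f i x + ∑ y ∈ (univ.erase i).erase x, f x y := fun x hx => by
    rw [← add_sum_erase _ _ (mem_erase.mpr ⟨(ne_of_mem_erase hx).symm, mem_univ i⟩),
      erase_right_comm, hf]
  rw [← add_sum_erase _ _ (mem_univ i), sum_congr rfl peel, sum_add_distrib]
  ring

theorem sum_sum_sum_erase_eq_three_mul_add (i : α) (f : α → α → α → ℝ)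
    (hf : ∀ x y l, f x y l = f y l x) :
    ∑ x, ∑ y ∈ univ.erase x, ∑ l ∈ (univ.erase x).erase y, f x y l
      = 3 * ∑ y ∈ univ.erase i, ∑ l ∈ (univ.erase i).erase y, f i y l
        + ∑ x ∈ univ.erase i, ∑ y ∈ (univ.erase i).erase x,
            ∑ l ∈ ((univ.erase i).erase x).erase y, f x y l := by
  have peel : ∀ x ∈ univ.erase i,
      ∑ y ∈ univ.erase x, ∑ l ∈ (univ.erase x).erase y, f x y l
        = ∑ l ∈ (univ.erase i).erase x, f i l x
          + (∑ y ∈ (univ.erase i).erase x, f i x y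
            + ∑ y ∈ (univ.erase i).erase x, ∑ l ∈ ((univ.erase i).erase x).erase y, f x y l) :=
      fun x hx => by
    have hxi := ne_of_mem_erase hx
    rw [← add_sum_erase _ _ (mem_erase.mpr ⟨hxi.symm, mem_univ i⟩), erase_right_comm (a := x)]
    congr 1
    · exact sum_congr rfl fun l _ => hf x i l
    · rw [← sum_add_distrib]
      refine sum_congr rfl fun y hy => ?_
      have hyi := ne_of_mem_erase (mem_of_mem_erase hy)
      rw [← add_sum_erase _ _ (mem_erase.mpr ⟨hyi.symm, mem_erase.mpr ⟨hxi.symm, mem_univ i⟩⟩),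
        hf, hf y, erase_right_comm (s := univ.erase x), erase_right_comm (s := univ) (a := x)]
  have swap : ∑ x ∈ univ.erase i, ∑ l ∈ (univ.erase i).erase x, f i l x
      = ∑ x ∈ univ.erase i, ∑ y ∈ (univ.erase i).erase x, f i x y :=
    sum_comm' fun x y => by simp only [mem_erase, mem_univ, and_true]; tauto
  rw [← add_sum_erase _ _ (mem_univ i), sum_congr rfl peel, sum_add_distrib, sum_add_distrib,
    swap]
  ring

end Splitting

section Potential

variable {n : ℕ} (v : Fin n → ℝ) (w : Fin n → Fin n → ℝ) (h φ m q : ℝ)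

/-- The terms of the potential that do not read row `i` of the state. -/
def potentialWithout (i : Fin n) (S : NetState n) : ℝ :=
  (∑ x ∈ univ.erase i, bv (S x x) * v x)
    + (h / 2) * ∑ x ∈ univ.erase i, ∑ y ∈ (univ.erase i).erase x, bv (S x x) * bv (S y y)
    + (φ / 2) * ∑ x ∈ univ.erase i, ∑ y ∈ (univ.erase i).erase x,
        bv (S x x) * bv (S y y) * bv (S x y) * bv (S y x)
    + (∑ x ∈ univ.erase i, ∑ y ∈ univ.erase x, bv (S x y) * w x y)
    + (m / 2) * ∑ x ∈ univ.erase i, ∑ y ∈ (univ.erase i).erase x, bv (S x y) * bv (S y x)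
    + (q / 3) * ∑ x ∈ univ.erase i, ∑ y ∈ (univ.erase i).erase x,
        ∑ l ∈ ((univ.erase i).erase x).erase y, bv (S x y) * bv (S y l) * bv (S l x)

theorem potential_eq_payoff_add_potentialWithout (i : Fin n) (S : NetState n) :
    potential n v w h φ m q S
      = payoff n v w h φ m q S i + potentialWithout v w h φ m q i S := by
  simp only [potential, payoff, potentialWithout, filter_ne', filter_ne_and_ne]
  rw [← add_sum_erase _ (fun x => bv (S x x) * v x) (mem_univ i),
    sum_sum_erase_eq_two_mul_add i (fun x y => bv (S x x) * bv (S y y)) fun _ _ => by ring,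
    sum_sum_erase_eq_two_mul_add i (fun x y => bv (S x x) * bv (S y y) * bv (S x y) * bv (S y x))
      fun _ _ => by ring,
    ← add_sum_erase _ (fun x => ∑ y ∈ univ.erase x, bv (S x y) * w x y) (mem_univ i),
    sum_sum_erase_eq_two_mul_add i (fun x y => bv (S x y) * bv (S y x)) fun _ _ => by ring,
    sum_sum_sum_erase_eq_three_mul_add i (fun x y l => bv (S x y) * bv (S y l) * bv (S l x))
      fun _ _ _ => by ring]
  have hφ : ∑ y ∈ univ.erase i, bv (S i i) * bv (S y y) * bv (S i y) * bv (S y i)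
      = bv (S i i) * ∑ y ∈ univ.erase i, bv (S i y) * bv (S y i) * bv (S y y) := by
    rw [mul_sum]
    exact sum_congr rfl fun _ _ => by ring
  rw [← mul_sum, hφ]
  ring

theorem potentialWithout_congr {i : Fin n} {S T : NetState n} (hST : ∀ x ≠ i, S x = T x) :
    potentialWithout v w h φ m q i S = potentialWithout v w h φ m q i T := by
  simp +contextual (disch := simp_all) only [potentialWithout, hST]

theorem potential_sub_payoff_congr {i : Fin n} {S T : NetState n} (hST : ∀ x ≠ i, S x = T x) :
    potential n v w h φ m q S - payoff n v w h φ m q S i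
      = potential n v w h φ m q T - payoff n v w h φ m q T i := by
  simp only [potential_eq_payoff_add_potentialWithout v w h φ m q i, add_sub_cancel_left,
    potentialWithout_congr v w h φ m q hST]

end Potential

section HeatBath

variable {α : Type*} [Fintype α] [DecidableEq α]

def heatBath (N : α → Finset α) (r : α → ℝ) (S S' : α) : ℝ :=
  if S' ∈ N S then r S' / ∑ T ∈ N S, r T else 0

theorem sum_mul_heatBath_eq {N : α → Finset α} (self_mem : ∀ S, S ∈ N S)
    (eq_of_mem : ∀ S, ∀ T ∈ N S, N T = N S) {r p : α → ℝ} (hr : ∀ S, 0 < r S)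
    (hp : ∀ S, ∀ T ∈ N S, p S * r T = p T * r S) (S' : α) :
    ∑ S, p S * heatBath N r S S' = p S' := by
  have hblock : univ.filter (fun S => S' ∈ N S) = N S' := by
    ext S
    simp only [mem_filter, mem_univ, true_and]
    exact ⟨fun h => eq_of_mem S S' h ▸ self_mem S, fun h => eq_of_mem S' S h ▸ self_mem S'⟩
  have hpos : 0 < ∑ T ∈ N S', r T := sum_pos (fun T _ => hr T) ⟨S', self_mem S'⟩
  calc ∑ S, p S * heatBath N r S S'
      = ∑ S ∈ N S', p S' * (r S / ∑ T ∈ N S', r T) := by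
        simp only [heatBath, mul_ite, mul_zero]
        rw [← sum_filter, hblock]
        refine sum_congr rfl fun S hS => ?_
        rw [eq_of_mem S' S hS, mul_div_assoc', mul_div_assoc', hp S' S hS]
    _ = p S' := by rw [← mul_sum, ← sum_div, div_self hpos.ne', mul_one]

end HeatBath

section Neighborhood

variable {n : ℕ} {i : Fin n} {J : Finset (Fin n)}

theorem mem_nbhd {S S' : NetState n} : S' ∈ nbhd n i J S ↔ inNbhd n i J S S' := by
  classical
  simp [nbhd]

theorem self_mem_nbhd (S : NetState n) : S ∈ nbhd n i J S :=
  mem_nbhd.mpr fun _ _ _ => rfl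

theorem nbhd_eq_of_mem {S T : NetState n} (hT : T ∈ nbhd n i J S) :
    nbhd n i J T = nbhd n i J S := by
  have hST := mem_nbhd.mp hT
  ext U
  simp only [mem_nbhd]
  exact forall₂_congr fun x y => imp_congr_right fun hxy => by rw [hST x y hxy]

theorem row_eq_of_mem_nbhd {S T : NetState n} (hT : T ∈ nbhd n i J S) :
    ∀ x ≠ i, T x = S x :=
  fun x hx => funext fun y => mem_nbhd.mp hT x y fun hxy => hx hxy.1

end Neighborhood

section Model

variable {n : ℕ} (v : Fin n → ℝ) (w : Fin n → Fin n → ℝ) (h φ m q β : ℝ)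

theorem statDist_mul_exp_payoff_comm {i : Fin n} {J : Finset (Fin n)} {S T : NetState n}
    (hT : T ∈ nbhd n i J S) :
    statDist n v w h φ m q β S * Real.exp (payoff n v w h φ m q T i / β)
      = statDist n v w h φ m q β T * Real.exp (payoff n v w h φ m q S i / β) := by
  have hΦ := potential_sub_payoff_congr v w h φ m q (row_eq_of_mem_nbhd hT)
  simp only [statDist, div_mul_eq_mul_div, ← Real.exp_add, ← add_div]
  congr 3
  linarith

theorem kernel_eq_sum_heatBath (k : ℕ) (qm : Fin n × Finset (Fin n) → ℝ) (S S' : NetState n) :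
    kernel n v w h φ m q β k qm S S'
      = ∑ μ ∈ meetings n k, qm μ *
          heatBath (nbhd n μ.1 μ.2) (fun T => Real.exp (payoff n v w h φ m q T μ.1 / β)) S S' := by
  classical
  simp only [kernel, heatBath, sum_filter, mul_ite, mul_zero, mul_div_assoc]

end Model

theorem stationary_distribution_general (n : ℕ)
    (v : Fin n → ℝ) (w : Fin n → Fin n → ℝ) (h φ m q : ℝ) (β : ℝ) :
    ∀ k : ℕ, 1 < k → k ≤ n →
      ∀ qm : Fin n × Finset (Fin n) → ℝ,
        (∀ μ ∈ meetings n k, 0 < qm μ) →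
        (∑ μ ∈ meetings n k, qm μ = 1) →
        ∀ S' : NetState n,
          ∑ S : NetState n, statDist n v w h φ m q β S * kernel n v w h φ m q β k qm S S'
            = statDist n v w h φ m q β S' := by
  intro k _ _ qm _ hqm S'
  have hstep : ∀ μ : Fin n × Finset (Fin n), ∑ S, statDist n v w h φ m q β S *
      heatBath (nbhd n μ.1 μ.2) (fun T => Real.exp (payoff n v w h φ m q T μ.1 / β)) S S'
        = statDist n v w h φ m q β S' := fun μ =>
    sum_mul_heatBath_eq self_mem_nbhd (fun _ _ => nbhd_eq_of_mem) (fun _ => Real.exp_pos _)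
      (fun _ _ => statDist_mul_exp_payoff_comm v w h φ m q β) S'
  simp_rw [kernel_eq_sum_heatBath, mul_sum, mul_left_comm (statDist n v w h φ m q β _)]
  rw [sum_comm]
  simp_rw [← mul_sum, hstep, ← sum_mul, hqm, one_mul]

/-- **Stationary distribution of the `k`-player logit dynamic.** Let
`π(S) = exp(Φ(S)/β) / Σ_T exp(Φ(T)/β)`. Then for every `1 < k ≤ n` and every positive
state-independent meeting distribution `qm` on meetings of dimension `k`, `π` is stationary
for `P_k`: `Σ_S π(S) P_k(S, S') = π(S')` for all `S'`. In particular the stationary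
distribution is the same for all `k` and all such meeting distributions. -/
theorem stationary_distribution (n : ℕ) (hn : 2 ≤ n)
    (v : Fin n → ℝ) (w : Fin n → Fin n → ℝ) (h φ m q : ℝ) (β : ℝ) (hβ : 0 < β) :
    ∀ k : ℕ, 1 < k → k ≤ n →
      ∀ qm : Fin n × Finset (Fin n) → ℝ,
        (∀ μ ∈ meetings n k, 0 < qm μ) →
        (∑ μ ∈ meetings n k, qm μ = 1) →
        ∀ S' : NetState n,
          ∑ S : NetState n, statDist n v w h φ m q β S * kernel n v w h φ m q β k qm S S'
            = statDist n v w h φ m q β S' :=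
  stationary_distribution_general n v w h φ m q β
end
end
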